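/- Let Γ be a finite connected self-centered simple graph with vertex set V and base point v0 ∈ V, satisfying conditions (S1) and (S2). Then (Γ, v0) is hypergroup productive (i.e., p_{i,j}^k = p_{j,i}^k for all i,j,k ∈ I and Σ_{h∈I} p_{l,j}^h p_{i,h}^m = Σ_{h∈I} p_{i,l}^h p_{h,j}^m for all i,j,l,m ∈ I) if and only if D · A_k · A_l = D · A_l · A_k holds for all k, l ∈ I. -/

import Mathlib

open Finset

noncomputable section

/-- The sphere of radius `k` around `v`: all vertices at graph distance `k` from `v`. -/
def sph {V : Type*} [Fintype V] (G : SimpleGraph V) (k : ℕ) (v : V) : Finset V :=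
  Finset.univ.filter fun w => G.dist v w = k

/-- Eccentricity of a vertex. -/
def ecc {V : Type*} [Fintype V] (G : SimpleGraph V) (v : V) : ℕ :=
  Finset.univ.sup fun w => G.dist v w

/-- Diameter of the graph. -/
def gdiam {V : Type*} [Fintype V] (G : SimpleGraph V) : ℕ :=
  Finset.univ.sup fun v => ecc G v

/-- The `k`-adjacency matrix `A^(k)`. -/
def Adjk {V : Type*} [Fintype V] (G : SimpleGraph V) (k : ℕ) : Matrix V V ℝ :=
  Matrix.of fun x y => if G.dist x y = k then (1 : ℝ) else 0

/-- The normalized `k`-adjacency matrix `A_k = (1/μ_k) A^(k)`. -/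
def Anorm {V : Type*} [Fintype V] (G : SimpleGraph V) (v0 : V) (k : ℕ) : Matrix V V ℝ :=
  (((sph G k v0).card : ℝ))⁻¹ • Adjk G k

/-- The structure constant `p_{i,j}^k` of the random walk on `(Γ, v0)`. -/
def pcoef {V : Type*} [Fintype V] [DecidableEq V] (G : SimpleGraph V) (v0 : V)
    (i j k : ℕ) : ℝ :=
  (1 / ((sph G i v0).card : ℝ)) *
    ∑ v ∈ sph G i v0, ((sph G j v ∩ sph G k v0).card : ℝ) / ((sph G j v).card : ℝ)

/-- The matrix `D : I × V`, with `(i,v)`-entry `1` if `d(v0,v) = i` and `0` otherwise. -/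
def Dmat {V : Type*} [Fintype V] (G : SimpleGraph V) (v0 : V) :
    Matrix (Fin (gdiam G + 1)) V ℝ :=
  Matrix.of fun i v => if G.dist v0 v = (i : ℕ) then (1 : ℝ) else 0

/-- The `k`-transition matrix `P_k`, with `(i,j)`-entry `p_{k,j}^i`. -/
def Pmat {V : Type*} [Fintype V] [DecidableEq V] (G : SimpleGraph V) (v0 : V) (k : ℕ) :
    Matrix (Fin (gdiam G + 1)) (Fin (gdiam G + 1)) ℝ :=
  Matrix.of fun i j => pcoef G v0 k (j : ℕ) (i : ℕ)

section Aux

variable {V : Type*} [Fintype V] {G : SimpleGraph V}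
set_option linter.unusedSectionVars false

lemma mem_sph {k : ℕ} {v w : V} : w ∈ sph G k v ↔ G.dist v w = k := by
  simp [sph]

lemma dist_le_gdiam (v w : V) : G.dist v w ≤ gdiam G :=
  le_trans (Finset.le_sup (f := fun w => G.dist v w) (mem_univ w))
    (Finset.le_sup (f := fun v => ecc G v) (mem_univ v))

lemma myLengthDrop {u v : V} (p : G.Walk u v) : ∀ n : ℕ, (p.drop n).length = p.length - n := by
  induction p with
  | nil => intro n; cases n <;> simp [SimpleGraph.Walk.drop]
  | cons h q ih =>
    intro n
    cases n with
    | zero => simp [SimpleGraph.Walk.drop]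
    | succ n => simp [SimpleGraph.Walk.drop, ih n]

lemma myDistGetVertLe (hconn : G.Connected) {u v : V} (p : G.Walk u v) :
    ∀ i : ℕ, G.dist u (p.getVert i) ≤ i := by
  induction p with
  | nil => intro i; simp [SimpleGraph.Walk.getVert, SimpleGraph.dist_self]
  | cons h q ih =>
    intro i
    cases i with
    | zero => simp [SimpleGraph.Walk.getVert_zero]
    | succ i =>
      rw [SimpleGraph.Walk.getVert_cons_succ]
      calc G.dist _ _ ≤ G.dist _ _ + G.dist _ _ := hconn.dist_triangle
        _ ≤ 1 + i := by
            gcongr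
            · exact (SimpleGraph.dist_eq_one_iff_adj.mpr h).le
            · exact ih i
        _ = i + 1 := by omega

lemma myExistsDist (hconn : G.Connected) (v0 : V) {i : ℕ} (hi : i ≤ ecc G v0) :
    ∃ z, G.dist v0 z = i := by
  obtain ⟨w, -, hw⟩ := Finset.exists_mem_eq_sup (univ : Finset V) ⟨v0, mem_univ v0⟩
    (fun w => G.dist v0 w)
  rw [ecc, hw] at hi
  obtain ⟨p, hp⟩ := hconn.exists_walk_length_eq_dist v0 w
  refine ⟨p.getVert i, le_antisymm (myDistGetVertLe hconn p i) ?_⟩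
  have h1 : G.dist v0 w ≤ G.dist v0 (p.getVert i) + G.dist (p.getVert i) w :=
    hconn.dist_triangle
  have h2 : G.dist (p.getVert i) w ≤ p.length - i :=
    (myLengthDrop p i) ▸ SimpleGraph.dist_le (p.drop i)
  omega

variable [DecidableEq V]

lemma sph_card_pos (hconn : G.Connected) (hsc : ∀ v : V, ecc G v = gdiam G) (v0 : V)
    {i : ℕ} (hi : i ≤ gdiam G) : 0 < ((sph G i v0).card : ℝ) := by
  obtain ⟨z, hz⟩ := myExistsDist hconn v0 (i := i) (hi.trans_eq (hsc v0).symm)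
  exact_mod_cast Finset.card_pos.mpr ⟨z, mem_sph.mpr hz⟩

lemma card_inter_sum (v0 : V) (j b : ℕ) (v : V) :
    ((sph G j v ∩ sph G b v0).card : ℝ)
      = ∑ w ∈ sph G b v0, (if G.dist v w = j then (1:ℝ) else 0) := by
  rw [Finset.inter_comm, ← Finset.filter_mem_eq_inter, Finset.card_filter]
  push_cast
  exact Finset.sum_congr rfl fun w _ => by simp [mem_sph]

lemma pcoef_rep (hconn : G.Connected) (hsc : ∀ v : V, ecc G v = gdiam G) (v0 : V)
    (hS1 : ∀ i : ℕ, i ≤ gdiam G → ∀ v w : V, (sph G i v).card = (sph G i w).card)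
    (hS2 : ∀ i j k : ℕ, i ≤ gdiam G → j ≤ gdiam G → k ≤ gdiam G →
      ∀ v ∈ sph G k v0, ∀ w ∈ sph G k v0,
        (sph G i v ∩ sph G j v0).card = (sph G i w ∩ sph G j v0).card)
    {i j k : ℕ} (hi : i ≤ gdiam G) (hj : j ≤ gdiam G) (hk : k ≤ gdiam G)
    {v : V} (hv : v ∈ sph G i v0) :
    ((sph G j v ∩ sph G k v0).card : ℝ) = ((sph G j v0).card : ℝ) * pcoef G v0 i j k := by
  have hμi := sph_card_pos hconn hsc v0 hi
  have hμj := sph_card_pos hconn hsc v0 hj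
  have hconst : ∀ w ∈ sph G i v0,
      ((sph G j w ∩ sph G k v0).card : ℝ) / ((sph G j w).card : ℝ)
        = ((sph G j v ∩ sph G k v0).card : ℝ) / ((sph G j v0).card : ℝ) := by
    intro w hw
    rw [hS1 j hj w v0, hS2 j k i hj hk hi w hw v hv]
  rw [pcoef, Finset.sum_congr rfl hconst, Finset.sum_const, nsmul_eq_mul]
  field_simp

lemma pcoef_swap13 (hconn : G.Connected) (hsc : ∀ v : V, ecc G v = gdiam G) (v0 : V)
    (hS1 : ∀ i : ℕ, i ≤ gdiam G → ∀ v w : V, (sph G i v).card = (sph G i w).card)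
    {i j k : ℕ} (hi : i ≤ gdiam G) (hj : j ≤ gdiam G) (hk : k ≤ gdiam G) :
    ((sph G i v0).card : ℝ) * pcoef G v0 i j k
      = ((sph G k v0).card : ℝ) * pcoef G v0 k j i := by
  have hμj := sph_card_pos hconn hsc v0 hj
  have key : ∀ a b : ℕ, a ≤ gdiam G →
      ((sph G a v0).card : ℝ) * pcoef G v0 a j b * ((sph G j v0).card : ℝ)
        = ∑ v ∈ sph G a v0, ∑ w ∈ sph G b v0, (if G.dist v w = j then (1:ℝ) else 0) := by
    intro a b ha
    have hμa := sph_card_pos hconn hsc v0 ha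
    have hterm : ∀ v ∈ sph G a v0,
        ((sph G j v ∩ sph G b v0).card : ℝ) / ((sph G j v).card : ℝ)
          = (∑ w ∈ sph G b v0, (if G.dist v w = j then (1:ℝ) else 0))
              / ((sph G j v0).card : ℝ) := by
      intro v hv
      rw [hS1 j hj v v0, card_inter_sum v0 j b v]
    rw [pcoef, Finset.sum_congr rfl hterm, ← Finset.sum_div]
    field_simp
  have h1 := key i k hi
  have h2 := key k i hk
  rw [Finset.sum_comm] at h1
  have h3 : ∀ w ∈ sph G k v0, ∀ v ∈ sph G i v0,
      (if G.dist v w = j then (1:ℝ) else 0) = (if G.dist w v = j then (1:ℝ) else 0) := by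
    intro w _ v _; rw [SimpleGraph.dist_comm]
  rw [Finset.sum_congr rfl (fun w hw => Finset.sum_congr rfl (h3 w hw))] at h1
  exact mul_right_cancel₀ (ne_of_gt hμj) (h1.trans h2.symm)

lemma sph_zero (hconn : G.Connected) (v0 : V) : sph G 0 v0 = {v0} := by
  ext w
  simp [mem_sph, hconn.dist_eq_zero_iff, eq_comm]

lemma pcoef_zero (hconn : G.Connected) (hsc : ∀ v : V, ecc G v = gdiam G) (v0 : V)
    {a b : ℕ} (ha : a ≤ gdiam G) (hb : b ≤ gdiam G) :
    pcoef G v0 0 a b = if a = b then 1 else 0 := by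
  have hμa := sph_card_pos hconn hsc v0 ha
  rw [pcoef, sph_zero hconn v0, Finset.sum_singleton, Finset.card_singleton]
  by_cases h : a = b
  · subst h
    rw [Finset.inter_self]
    simp [div_self (ne_of_gt hμa)]
  · have hdisj : sph G a v0 ∩ sph G b v0 = ∅ := by
      ext w
      simp only [Finset.mem_inter, mem_sph, Finset.notMem_empty, iff_false, not_and]
      intro h1 h2
      exact h (h1 ▸ h2 ▸ rfl)
    simp [hdisj, h]

lemma entry_eq (hconn : G.Connected) (hsc : ∀ v : V, ecc G v = gdiam G) (v0 : V)
    (hS1 : ∀ i : ℕ, i ≤ gdiam G → ∀ v w : V, (sph G i v).card = (sph G i w).card)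
    (hS2 : ∀ i j k : ℕ, i ≤ gdiam G → j ≤ gdiam G → k ≤ gdiam G →
      ∀ v ∈ sph G k v0, ∀ w ∈ sph G k v0,
        (sph G i v ∩ sph G j v0).card = (sph G i w ∩ sph G j v0).card)
    {k l : ℕ} (hk : k ≤ gdiam G) (hl : l ≤ gdiam G) (i : Fin (gdiam G + 1)) (y : V) :
    (Dmat G v0 * Anorm G v0 k * Anorm G v0 l) i y
      = ∑ j ∈ Finset.range (gdiam G + 1),
          pcoef G v0 j k (i : ℕ) * pcoef G v0 (G.dist v0 y) l j := by
  have hμk := sph_card_pos hconn hsc v0 hk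
  have hμl := sph_card_pos hconn hsc v0 hl
  have hi' : (i : ℕ) ≤ gdiam G := Nat.lt_succ_iff.mp i.isLt
  have hDA : ∀ z : V, (Dmat G v0 * Anorm G v0 k) i z = pcoef G v0 (G.dist v0 z) k (i : ℕ) := by
    intro z
    rw [Matrix.mul_apply]
    have h1 : ∀ x : V, Dmat G v0 i x * Anorm G v0 k x z
        = ((sph G k v0).card : ℝ)⁻¹
            * (if G.dist v0 x = (i : ℕ) ∧ G.dist x z = k then (1:ℝ) else 0) := by
      intro x
      by_cases h1 : G.dist v0 x = (i : ℕ) <;> by_cases h2 : G.dist x z = k <;>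
        simp [Dmat, Anorm, Adjk, h1, h2]
    rw [Finset.sum_congr rfl fun x _ => h1 x, ← Finset.mul_sum, Finset.sum_boole]
    have h2 : Finset.univ.filter (fun x => G.dist v0 x = (i : ℕ) ∧ G.dist x z = k)
        = sph G k z ∩ sph G (i : ℕ) v0 := by
      ext x
      simp only [Finset.mem_filter, Finset.mem_univ, true_and, Finset.mem_inter, mem_sph]
      rw [SimpleGraph.dist_comm (u := z) (v := x)]
      tauto
    rw [h2, pcoef_rep hconn hsc v0 hS1 hS2 (dist_le_gdiam v0 z) hk hi' (mem_sph.mpr rfl)]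
    exact inv_mul_cancel_left₀ (ne_of_gt hμk) _
  rw [Matrix.mul_apply]
  have h3 : ∀ z : V, (Dmat G v0 * Anorm G v0 k) i z * Anorm G v0 l z y
      = pcoef G v0 (G.dist v0 z) k (i : ℕ) * ((sph G l v0).card : ℝ)⁻¹
          * (if G.dist z y = l then (1:ℝ) else 0) := by
    intro z
    rw [hDA z]
    by_cases h : G.dist z y = l <;> simp [Anorm, Adjk, h]
  rw [Finset.sum_congr rfl fun z _ => h3 z,
    ← Finset.sum_fiberwise_of_maps_to (g := fun z => G.dist v0 z)
      (t := Finset.range (gdiam G + 1))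
      (fun z _ => Finset.mem_range.mpr (Nat.lt_succ_of_le (dist_le_gdiam v0 z))) _]
  refine Finset.sum_congr rfl fun j hj => ?_
  have hjd : j ≤ gdiam G := Nat.lt_succ_iff.mp (Finset.mem_range.mp hj)
  have h4 : ∀ z ∈ Finset.univ.filter (fun z => G.dist v0 z = j),
      pcoef G v0 (G.dist v0 z) k (i : ℕ) * ((sph G l v0).card : ℝ)⁻¹
          * (if G.dist z y = l then (1:ℝ) else 0)
        = pcoef G v0 j k (i : ℕ) * ((sph G l v0).card : ℝ)⁻¹
          * (if G.dist y z = l then (1:ℝ) else 0) := by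
    intro z hz
    rw [Finset.mem_filter] at hz
    rw [hz.2, SimpleGraph.dist_comm (u := z) (v := y)]
  rw [Finset.sum_congr rfl h4, ← Finset.mul_sum]
  have h5 : (Finset.univ.filter (fun z => G.dist v0 z = j)) = sph G j v0 := rfl
  rw [h5, ← card_inter_sum v0 l j y,
    pcoef_rep hconn hsc v0 hS1 hS2 (dist_le_gdiam v0 y) hl hjd (mem_sph.mpr rfl)]
  field_simp

end Aux

theorem stmt10 {V : Type*} [Fintype V] [DecidableEq V] (G : SimpleGraph V)
    (hconn : G.Connected) (v0 : V)
    (hsc : ∀ v : V, ecc G v = gdiam G)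
    (hS1 : ∀ i : ℕ, i ≤ gdiam G → ∀ v w : V, (sph G i v).card = (sph G i w).card)
    (hS2 : ∀ i j k : ℕ, i ≤ gdiam G → j ≤ gdiam G → k ≤ gdiam G →
      ∀ v ∈ sph G k v0, ∀ w ∈ sph G k v0,
        (sph G i v ∩ sph G j v0).card = (sph G i w ∩ sph G j v0).card) :
    ((∀ i j k : ℕ, i ≤ gdiam G → j ≤ gdiam G → k ≤ gdiam G →
        pcoef G v0 i j k = pcoef G v0 j i k) ∧
      (∀ i j l m : ℕ, i ≤ gdiam G → j ≤ gdiam G → l ≤ gdiam G → m ≤ gdiam G →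
        ∑ h ∈ Finset.range (gdiam G + 1), pcoef G v0 l j h * pcoef G v0 i h m =
          ∑ h ∈ Finset.range (gdiam G + 1), pcoef G v0 i l h * pcoef G v0 h j m)) ↔
      (∀ k l : ℕ, k ≤ gdiam G → l ≤ gdiam G →
        Dmat G v0 * Anorm G v0 k * Anorm G v0 l =
          Dmat G v0 * Anorm G v0 l * Anorm G v0 k) := by
  have hμ : ∀ n : ℕ, n ≤ gdiam G → (0:ℝ) < ((sph G n v0).card : ℝ) :=
    fun n hn => sph_card_pos hconn hsc v0 hn
  have hmat_iff : ∀ k l : ℕ, k ≤ gdiam G → l ≤ gdiam G →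
      ((Dmat G v0 * Anorm G v0 k * Anorm G v0 l
          = Dmat G v0 * Anorm G v0 l * Anorm G v0 k) ↔
        (∀ i m : ℕ, i ≤ gdiam G → m ≤ gdiam G →
          ∑ j ∈ Finset.range (gdiam G + 1), pcoef G v0 j k i * pcoef G v0 m l j
            = ∑ j ∈ Finset.range (gdiam G + 1), pcoef G v0 j l i * pcoef G v0 m k j)) := by
    intro k l hk hl
    constructor
    · intro h i m hi hm
      obtain ⟨y, hy⟩ := myExistsDist hconn v0 (i := m) (hm.trans_eq (hsc v0).symm)
      have h' := congrFun (congrFun h ⟨i, Nat.lt_succ_of_le hi⟩) y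
      rw [entry_eq hconn hsc v0 hS1 hS2 hk hl, entry_eq hconn hsc v0 hS1 hS2 hl hk, hy] at h'
      exact h'
    · intro h
      ext i' y
      rw [entry_eq hconn hsc v0 hS1 hS2 hk hl i' y, entry_eq hconn hsc v0 hS1 hS2 hl hk i' y]
      exact h (i' : ℕ) (G.dist v0 y) (Nat.lt_succ_iff.mp i'.isLt) (dist_le_gdiam v0 y)
  have htrans : ∀ i k l m : ℕ, i ≤ gdiam G → k ≤ gdiam G → l ≤ gdiam G → m ≤ gdiam G →
      ((sph G m v0).card : ℝ)
          * ∑ j ∈ Finset.range (gdiam G + 1), pcoef G v0 j k i * pcoef G v0 m l j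
        = ((sph G i v0).card : ℝ)
          * ∑ j ∈ Finset.range (gdiam G + 1), pcoef G v0 i k j * pcoef G v0 j l m := by
    intro i k l m hi hk hl hm
    rw [Finset.mul_sum, Finset.mul_sum]
    refine Finset.sum_congr rfl fun j hj => ?_
    have hjd : j ≤ gdiam G := Nat.lt_succ_iff.mp (Finset.mem_range.mp hj)
    have e1 := pcoef_swap13 hconn hsc v0 hS1 hjd hk hi
    have e2 := pcoef_swap13 hconn hsc v0 hS1 hm hl hjd
    refine mul_left_cancel₀ (ne_of_gt (hμ j hjd)) ?_
    calc ((sph G j v0).card : ℝ) * (((sph G m v0).card : ℝ)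
            * (pcoef G v0 j k i * pcoef G v0 m l j))
        = (((sph G j v0).card : ℝ) * pcoef G v0 j k i)
            * (((sph G m v0).card : ℝ) * pcoef G v0 m l j) := by ring
      _ = (((sph G i v0).card : ℝ) * pcoef G v0 i k j)
            * (((sph G j v0).card : ℝ) * pcoef G v0 j l m) := by rw [e1, e2]
      _ = ((sph G j v0).card : ℝ) * (((sph G i v0).card : ℝ)
            * (pcoef G v0 i k j * pcoef G v0 j l m)) := by ring
  constructor
  · rintro ⟨hcomm, hassoc⟩ k l hk hl
    refine (hmat_iff k l hk hl).mpr ?_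
    intro i m hi hm
    have hTlhs : ∑ j ∈ Finset.range (gdiam G + 1), pcoef G v0 i k j * pcoef G v0 j l m
        = ∑ j ∈ Finset.range (gdiam G + 1), pcoef G v0 i l j * pcoef G v0 j k m := by
      have a1 := hassoc i l k m hi hl hk hm
      have a2 := hassoc i k l m hi hk hl hm
      rw [← a1, ← a2]
      refine Finset.sum_congr rfl fun h hh => ?_
      rw [hcomm k l h hk hl (Nat.lt_succ_iff.mp (Finset.mem_range.mp hh))]
    have h1 := htrans i k l m hi hk hl hm
    have h2 := htrans i l k m hi hl hk hm
    refine mul_left_cancel₀ (ne_of_gt (hμ m hm)) ?_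
    rw [h1, h2, hTlhs]
  · intro hmat
    have hstar : ∀ k l i m : ℕ, k ≤ gdiam G → l ≤ gdiam G → i ≤ gdiam G → m ≤ gdiam G →
        ∑ j ∈ Finset.range (gdiam G + 1), pcoef G v0 j k i * pcoef G v0 m l j
          = ∑ j ∈ Finset.range (gdiam G + 1), pcoef G v0 j l i * pcoef G v0 m k j :=
      fun k l i m hk hl hi hm => (hmat_iff k l hk hl).mp (hmat k l hk hl) i m hi hm
    have hT : ∀ i k l m : ℕ, i ≤ gdiam G → k ≤ gdiam G → l ≤ gdiam G → m ≤ gdiam G →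
        ∑ j ∈ Finset.range (gdiam G + 1), pcoef G v0 i k j * pcoef G v0 j l m
          = ∑ j ∈ Finset.range (gdiam G + 1), pcoef G v0 i l j * pcoef G v0 j k m := by
      intro i k l m hi hk hl hm
      refine mul_left_cancel₀ (ne_of_gt (hμ i hi)) ?_
      rw [← htrans i k l m hi hk hl hm, ← htrans i l k m hi hl hk hm,
        hstar k l i m hk hl hi hm]
    have hsum : ∀ a b c : ℕ, a ≤ gdiam G → b ≤ gdiam G → c ≤ gdiam G →
        ∑ j ∈ Finset.range (gdiam G + 1), pcoef G v0 j a c * pcoef G v0 0 b j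
          = pcoef G v0 b a c := by
      intro a b c ha hb hc
      have hterm : ∀ j ∈ Finset.range (gdiam G + 1),
          pcoef G v0 j a c * pcoef G v0 0 b j
            = if b = j then pcoef G v0 j a c else 0 := by
        intro j hj
        rw [pcoef_zero hconn hsc v0 hb (Nat.lt_succ_iff.mp (Finset.mem_range.mp hj))]
        by_cases h : b = j <;> simp [h]
      rw [Finset.sum_congr rfl hterm, Finset.sum_ite_eq]
      simp [Nat.lt_succ_of_le hb]
    have hcomm : ∀ i j k : ℕ, i ≤ gdiam G → j ≤ gdiam G → k ≤ gdiam G →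
        pcoef G v0 i j k = pcoef G v0 j i k := by
      intro a b c ha hb hc
      have h := hstar a b c 0 ha hb hc (Nat.zero_le _)
      rw [hsum a b c ha hb hc, hsum b a c hb ha hc] at h
      exact h.symm
    refine ⟨hcomm, ?_⟩
    intro i j l m hi hj hl hm
    have s1 : ∑ h ∈ Finset.range (gdiam G + 1), pcoef G v0 l j h * pcoef G v0 i h m
        = ∑ h ∈ Finset.range (gdiam G + 1), pcoef G v0 j l h * pcoef G v0 h i m := by
      refine Finset.sum_congr rfl fun h hh => ?_
      have hhd : h ≤ gdiam G := Nat.lt_succ_iff.mp (Finset.mem_range.mp hh)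
      rw [hcomm l j h hl hj hhd, hcomm i h m hi hhd hm]
    have s2 : ∑ h ∈ Finset.range (gdiam G + 1), pcoef G v0 j i h * pcoef G v0 h l m
        = ∑ h ∈ Finset.range (gdiam G + 1), pcoef G v0 i j h * pcoef G v0 h l m := by
      refine Finset.sum_congr rfl fun h hh => ?_
      rw [hcomm j i h hj hi (Nat.lt_succ_iff.mp (Finset.mem_range.mp hh))]
    rw [s1, hT j l i m hj hl hi hm, s2, hT i j l m hi hj hl hm]

end
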